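/- Assume κ is a regular uncountable cardinal with 2^{<κ} = κ and F₁,…,Fₙ are P-point filters on κ with witnessing functions π₁,…,πₙ. Then the filter ∏*_{i=1}^{n} F_i satisfies the generalized Galvin property: for every sequence ⟨Y_i : i < κ⁺⟩ of members of ∏*_{i=1}^{n} F_i and every sequence ⟨Z_i : i < κ⁺⟩ of subsets of κ, there is a set Y ⊆ κ⁺ of cardinality κ such that ⋂_{i∈Y} Y_i ∈ ∏*_{i=1}^{n} F_i and there is α ∈ κ⁺ \ Y with [Z_α]^{<ω} ⊆ ⋃_{i∈Y} [Z_i]^{<ω}. -/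

import Mathlib

open Cardinal Set

/-- `F` is a P-point filter on `κ` (identified with the ordinals below `κ`) with witnessing
function `π`. -/
def IsPPointFilter (κ : Cardinal) (F : Filter κ.ord.ToType)
    (π : κ.ord.ToType → κ.ord.ToType) : Prop :=
  (∀ A ∈ F, #↥A = κ) ∧
  (∀ (ι : Type) (A : ι → Set κ.ord.ToType), #ι < κ →
      (∀ i, A i ∈ F) → (⋂ i, A i) ∈ F) ∧
  (∃ X ∈ F, ∀ a : κ.ord.ToType, #↥{ν | ν ∈ X ∧ π ν = a} < κ) ∧
  (∀ A : κ.ord.ToType → Set κ.ord.ToType, (∀ i, A i ∈ F) →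
      {ν | ∀ i, i < π ν → ν ∈ A i} ∈ F)

/-- `[κ]^{n*}`: the set of tuples `⟨α₀,…,α_{n-1}⟩` such that `α_i < π_{i+1}(α_{i+1})`
for all consecutive indices. -/
def starTuples {C : Type} [LT C] (n : ℕ) (π : Fin n → C → C) :
    Set (Fin n → C) :=
  {a | ∀ (i : ℕ) (h : i + 1 < n),
    a ⟨i, Nat.lt_of_succ_lt h⟩ < π ⟨i + 1, h⟩ (a ⟨i + 1, h⟩)}

/-- Membership in the filter `∏*_{i} F i`, defined by recursion on the number of
coordinates. -/
def memStarProd {C : Type} : (n : ℕ) → (Fin (n + 1) → Filter C) →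
    Set (Fin (n + 1) → C) → Prop
  | 0, F, X => {a : C | (fun _ => a) ∈ X} ∈ F 0
  | n + 1, F, X =>
      {a : C | memStarProd n (fun i => F i.succ) {v | Fin.cons a v ∈ X}} ∈ F 0

/-!
Using the almost one-to-one condition and regularity, fix `s : κ → κ` such that for every
coordinate `k`, `F k`-almost every `b` satisfies `b < s j` whenever `π k b ≤ j`. The type of an
index `α < κ⁺` at level `j` is the trace of `Y α` below `s j` (the prefixes with entries below
`s j` whose sections are `∏*`-large) together with `Z α ∩ [0, j]`. Since `2^{<κ} = κ`, each level
has at most `κ` types, so some `α` shares its type at every level `j` with more than `κ` indices,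
and we may pick distinct `f j ≠ α` of the same type as `α` at level `j`. Every finite subset of
`Z α` is bounded by some `j`, hence contained in `Z (f j)`. Finally, by induction on `n` using
diagonal intersections, sets whose traces at every level `j` agree with that of one fixed
member of `∏* F` have their intersection in `∏* F`.
-/

open Filter Function

universe u

section Counting

variable {κ : Cardinal.{u}}

theorem mk_setOf_mk_preimage_le {α β : Type u} (hκ : ℵ₀ ≤ κ) (f : α → β)
    (hf : #(range f) ≤ κ) : #{a | #(f ⁻¹' {f a}) ≤ κ} ≤ κ := by
  calc #{a | #(f ⁻¹' {f a}) ≤ κ}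
      ≤ #(⋃ b : range f, {a | f a = b ∧ #(f ⁻¹' {(b : β)}) ≤ κ}) :=
        mk_le_mk_of_subset fun a ha => mem_iUnion.2 ⟨⟨f a, a, rfl⟩, rfl, ha⟩
    _ ≤ #(range f) * κ := by
        refine (mk_iUnion_le _).trans (mul_le_mul_right (ciSup_le' fun b => ?_) _)
        by_cases hb : #(f ⁻¹' {(b : β)}) ≤ κ
        · exact (mk_le_mk_of_subset fun a ha => ha.1).trans hb
        · simp [hb]
    _ ≤ κ := (mul_le_mul_left hf κ).trans (mul_eq_self hκ).le

theorem exists_forall_lt_mk_preimage {ι α β : Type u} (hκ : ℵ₀ ≤ κ) (hι : #ι ≤ κ)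
    (hα : κ < #α) (f : ι → α → β) (hf : ∀ i, #(range (f i)) ≤ κ) :
    ∃ a, ∀ i, κ < #(f i ⁻¹' {f i a}) := by
  have hbad : #(⋃ i, {a | #(f i ⁻¹' {f i a}) ≤ κ}) ≤ κ :=
    (mk_iUnion_le _).trans ((mul_le_mul' hι
      (ciSup_le' fun i => mk_setOf_mk_preimage_le hκ (f i) (hf i))).trans (mul_eq_self hκ).le)
  obtain ⟨a, ha⟩ : (⋃ i, {a | #(f i ⁻¹' {f i a}) ≤ κ})ᶜ.Nonempty := by
    rw [nonempty_compl]
    intro h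
    rw [h, mk_univ] at hbad
    exact hbad.not_gt hα
  exact ⟨a, by simpa using ha⟩

theorem lt_mk_diff_singleton {α : Type u} (hκ : ℵ₀ ≤ κ) {s : Set α} (hs : κ < #s) (a : α) :
    κ < #(s \ {a} : Set α) := by
  by_contra! h
  exact hs.not_ge <| (mk_le_mk_of_subset (subset_insert_sdiff_singleton a s)).trans <|
    mk_insert_le.trans <| (add_le_add_left h 1).trans (add_one_eq hκ).le

theorem mk_range_pair_le {α : Type*} {β γ : Type u} (f : α → β) (g : α → γ) :
    #(range fun a => (f a, g a)) ≤ #(range f) * #(range g) := by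
  rw [← mk_setProd]
  exact mk_le_mk_of_subset (range_pair_subset f g)

theorem mk_le_of_subset_powerset (h2 : ∀ ν < κ, (2 : Cardinal) ^ ν ≤ κ) {α : Type u}
    {S : Set (Set α)} {W : Set α} (hS : S ⊆ 𝒫 W) (hW : #W < κ) : #S ≤ κ :=
  (mk_le_mk_of_subset hS).trans ((mk_powerset W).trans_le (h2 _ hW))

theorem mk_setOf_list_forall_mem_le {α : Type u} (s : Set α) :
    #{l : List α | ∀ x ∈ l, x ∈ s} ≤ max ℵ₀ #s := by
  refine (mk_le_mk_of_subset fun l hl => ?_).trans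
    ((mk_range_le (f := List.map ((↑) : s → α))).trans (mk_list_le_max s))
  exact CanLift.prf l hl

end Counting

theorem exists_injective_forall_mem {ι α : Type u} [LinearOrder ι] [WellFoundedLT ι]
    {P : ι → Set α} (hP : ∀ i, #(Iio i) < #(P i)) :
    ∃ f : ι → α, Injective f ∧ ∀ i, f i ∈ P i := by
  have step (i : ι) (g : ∀ j < i, α) : ∃ a ∈ P i, ∀ j (hj : j < i), a ≠ g j hj := by
    have : ¬P i ⊆ range fun j : Iio i => g j j.2 := fun h =>
      ((mk_le_mk_of_subset h).trans mk_range_le).not_gt (hP i)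
    obtain ⟨a, ha, hna⟩ := not_subset.1 this
    exact ⟨a, ha, fun j hj h => hna ⟨⟨j, hj⟩, h.symm⟩⟩
  choose pick hpick hne using step
  let f : ι → α := wellFounded_lt.fix pick
  have hf (i : ι) : f i = pick i fun j _ => f j := wellFounded_lt.fix_eq _ _
  refine ⟨f, fun i j hij => ?_, fun i => hf i ▸ hpick _ _⟩
  by_contra h
  rcases lt_or_gt_of_ne h with h | h
  · exact hne j _ i h (by rw [← hf, hij])
  · exact hne i _ j h (by rw [← hf, hij])

section OrdToType

variable {κ : Cardinal.{u}}

theorem mk_Iic_ord_toType_lt (hκ : ℵ₀ ≤ κ) (j : κ.ord.ToType) : #(Iic j) < κ := by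
  rw [← Iio_insert]
  exact mk_insert_le.trans_lt
    (add_lt_of_lt hκ (by simpa using mk_Iio_lt j) (one_lt_aleph0.trans_le hκ))

theorem exists_forall_lt_of_mk_lt (hreg : κ.IsRegular) {T : Set κ.ord.ToType} (hT : #T < κ) :
    ∃ b, ∀ x ∈ T, x < b := by
  have : ¬IsCofinal T := fun hcof =>
    (Order.cof_le hcof).not_gt (by rwa [Ordinal.cof_toType, hreg.cof_ord])
  simpa [IsCofinal] using this

theorem exists_forall_eventually_lt_of_mk_fiber_lt (hreg : κ.IsRegular) {ι : Type u} [Finite ι]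
    {F : ι → Filter κ.ord.ToType} {π : ι → κ.ord.ToType → κ.ord.ToType}
    (hfib : ∀ k, ∃ X ∈ F k, ∀ a, #{ν | ν ∈ X ∧ π k ν = a} < κ) :
    ∃ s : κ.ord.ToType → κ.ord.ToType, ∀ k, ∀ᶠ b in F k, ∀ j, π k b ≤ j → b < s j := by
  choose X hXF hX using hfib
  have hsmall (j : κ.ord.ToType) :
      #(⋃ k, ⋃ a ∈ Iic j, {ν | ν ∈ X k ∧ π k ν = a}) < κ := by
    rw [card_iUnion_lt_iff_forall_of_isRegular hreg
      ((lt_aleph0_of_finite ι).trans_le hreg.aleph0_le)]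
    intro k
    rw [card_biUnion_lt_iff_forall_of_isRegular hreg (mk_Iic_ord_toType_lt hreg.aleph0_le j)]
    exact fun a _ => hX k a
  choose s hs using fun j => exists_forall_lt_of_mk_lt hreg (hsmall j)
  refine ⟨s, fun k => ?_⟩
  filter_upwards [hXF k] with b hb j hj
  exact hs j b (mem_iUnion.2 ⟨k, mem_biUnion hj ⟨hb, rfl⟩⟩)

end OrdToType

def starProd {C : Type*} : (n : ℕ) → (Fin (n + 1) → Filter C) → Filter (Fin (n + 1) → C)
  | 0, F => map (fun a _ => a) (F 0)
  | n + 1, F => (F 0).bind fun a => map (Fin.cons a) (starProd n fun i => F i.succ)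

section StarProd

variable {C : Type*} {n : ℕ}

theorem mem_starProd_zero {F : Fin 1 → Filter C} {X : Set (Fin 1 → C)} :
    X ∈ starProd 0 F ↔ (fun a _ => a) ⁻¹' X ∈ F 0 :=
  Iff.rfl

theorem mem_starProd_succ {F : Fin (n + 2) → Filter C} {X : Set (Fin (n + 2) → C)} :
    X ∈ starProd (n + 1) F ↔
      {a | {v | Fin.cons a v ∈ X} ∈ starProd n fun i => F i.succ} ∈ F 0 :=
  Iff.rfl

end StarProd

theorem memStarProd_iff_mem_starProd {C : Type} :
    ∀ {n : ℕ} {F : Fin (n + 1) → Filter C} {X : Set (Fin (n + 1) → C)},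
      memStarProd n F X ↔ X ∈ starProd n F
  | 0, _, _ => Iff.rfl
  | n + 1, F, X => by
    simp only [memStarProd, mem_starProd_succ, memStarProd_iff_mem_starProd]

instance Filter.cardinalInterFilter_bind {α β : Type u} {c : Cardinal.{u}} {f : Filter α}
    {m : α → Filter β} [CardinalInterFilter f c] [∀ a, CardinalInterFilter (m a) c] :
    CardinalInterFilter (f.bind m) c where
  cardinal_sInter_mem S hS hmem := by
    rw [mem_bind']
    filter_upwards [(cardinal_bInter_mem hS).2 fun s hs => mem_bind'.1 (hmem s hs)] with a ha
    exact (cardinal_sInter_mem hS).2 fun s hs => mem_iInter₂.1 ha s hs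

theorem cardinalInterFilter_starProd {C : Type u} {c : Cardinal.{u}} :
    ∀ {n : ℕ} {F : Fin (n + 1) → Filter C}, (∀ i, CardinalInterFilter (F i) c) →
      CardinalInterFilter (starProd n F) c
  | 0, F, hF => by
    have := hF 0
    unfold starProd
    infer_instance
  | n + 1, F, hF => by
    have := hF 0
    have := cardinalInterFilter_starProd (c := c) fun i => hF i.succ
    unfold starProd
    infer_instance

section PPoint

variable {κ : Cardinal} {F : Filter κ.ord.ToType} {π : κ.ord.ToType → κ.ord.ToType}

theorem IsPPointFilter.cardinalInterFilter (h : IsPPointFilter κ F π) :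
    CardinalInterFilter F κ where
  cardinal_sInter_mem S hS hmem := by
    rw [sInter_eq_iInter]
    exact h.2.1 S (↑) hS fun s => hmem s s.2

theorem IsPPointFilter.exists_mem_forall_mk_fiber_lt (h : IsPPointFilter κ F π) :
    ∃ X ∈ F, ∀ a, #{ν | ν ∈ X ∧ π ν = a} < κ :=
  h.2.2.1

theorem IsPPointFilter.diagInter_mem (h : IsPPointFilter κ F π)
    {A : κ.ord.ToType → Set κ.ord.ToType} (hA : ∀ i, A i ∈ F) : {ν | ∀ i < π ν, ν ∈ A i} ∈ F :=
  h.2.2.2 A hA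

end PPoint

/-- `l` is a prefix of a tuple at which the section of `A` is large for the product of the
remaining filters; a full-length prefix is positive iff it lies in `A`. -/
def IsPositivePrefix {C : Type*} :
    (n : ℕ) → (Fin (n + 1) → Filter C) → Set (Fin (n + 1) → C) → List C → Prop
  | n, F, A, [] => A ∈ starProd n F
  | 0, _, A, [b] => (fun _ => b) ∈ A
  | 0, _, _, _ :: _ :: _ => False
  | n + 1, F, A, b :: l => IsPositivePrefix n (fun i => F i.succ) {v | Fin.cons b v ∈ A} l

def starTrace {C : Type*} [LT C] (n : ℕ) (F : Fin (n + 1) → Filter C)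
    (A : Set (Fin (n + 1) → C)) (m : C) : Set (List C) :=
  {l | IsPositivePrefix n F A l ∧ ∀ x ∈ l, x < m}

section StarTrace

variable {C : Type*} [LT C] {n : ℕ} {m b : C}

theorem starTrace_subset (F : Fin (n + 1) → Filter C) (A : Set (Fin (n + 1) → C)) (m : C) :
    starTrace n F A m ⊆ {l | ∀ x ∈ l, x < m} :=
  fun _ hl => hl.2

theorem nil_mem_starTrace {F : Fin (n + 1) → Filter C} {A : Set (Fin (n + 1) → C)} :
    [] ∈ starTrace n F A m ↔ A ∈ starProd n F := by
  cases n <;> simp [starTrace, IsPositivePrefix]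

theorem singleton_mem_starTrace_zero {F : Fin 1 → Filter C} {A : Set (Fin 1 → C)} :
    [b] ∈ starTrace 0 F A m ↔ (fun _ => b) ∈ A ∧ b < m := by
  simp [starTrace, IsPositivePrefix]

theorem cons_mem_starTrace_succ {F : Fin (n + 2) → Filter C} {A : Set (Fin (n + 2) → C)}
    {l : List C} :
    b :: l ∈ starTrace (n + 1) F A m ↔
      l ∈ starTrace n (fun i => F i.succ) {v | Fin.cons b v ∈ A} m ∧ b < m := by
  simp [starTrace, IsPositivePrefix, and_comm, and_assoc]

theorem mem_starProd_of_starTrace_eq {F : Fin (n + 1) → Filter C}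
    {A A' : Set (Fin (n + 1) → C)} (h : starTrace n F A m = starTrace n F A' m)
    (hA' : A' ∈ starProd n F) : A ∈ starProd n F := by
  rwa [← nil_mem_starTrace (m := m), h, nil_mem_starTrace]

theorem mem_of_starTrace_zero_eq {F : Fin 1 → Filter C} {A A' : Set (Fin 1 → C)}
    (h : starTrace 0 F A m = starTrace 0 F A' m) (hb : b < m) (hA' : (fun _ => b) ∈ A') :
    (fun _ => b) ∈ A := by
  have := (singleton_mem_starTrace_zero (F := F)).2 ⟨hA', hb⟩
  rw [← h] at this
  exact (singleton_mem_starTrace_zero.1 this).1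

theorem starTrace_setOf_cons_mem_eq {F : Fin (n + 2) → Filter C}
    {A A' : Set (Fin (n + 2) → C)}
    (h : starTrace (n + 1) F A m = starTrace (n + 1) F A' m) (hb : b < m) :
    starTrace n (fun i => F i.succ) {v | Fin.cons b v ∈ A} m =
      starTrace n (fun i => F i.succ) {v | Fin.cons b v ∈ A'} m := by
  ext l
  simpa [cons_mem_starTrace_succ, hb] using Set.ext_iff.1 h (b :: l)

end StarTrace

theorem mk_range_starTrace_le {κ : Cardinal.{u}} (hκ : ℵ₀ < κ)
    (h2 : ∀ ν < κ, (2 : Cardinal) ^ ν ≤ κ) {D : Type*} {n : ℕ}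
    (F : Fin (n + 1) → Filter κ.ord.ToType) (A : D → Set (Fin (n + 1) → κ.ord.ToType))
    (m : κ.ord.ToType) : #(range fun d => starTrace n F (A d) m) ≤ κ := by
  refine mk_le_of_subset_powerset h2 (W := {l | ∀ x ∈ l, x ∈ Iio m}) ?_ ?_
  · rintro _ ⟨d, rfl⟩
    exact starTrace_subset F (A d) m
  · exact (mk_setOf_list_forall_mem_le _).trans_lt (max_lt hκ (by simpa using mk_Iio_lt m))

theorem iInter_mem_starProd_of_starTrace_eq {κ : Cardinal} :
    ∀ {n : ℕ} {F : Fin (n + 1) → Filter κ.ord.ToType}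
      {π : Fin (n + 1) → κ.ord.ToType → κ.ord.ToType}, (∀ i, IsPPointFilter κ (F i) (π i)) →
      ∀ {s : κ.ord.ToType → κ.ord.ToType}, (∀ k, ∀ᶠ b in F k, ∀ j, π k b ≤ j → b < s j) →
      ∀ {A : κ.ord.ToType → Set (Fin (n + 1) → κ.ord.ToType)}
        {A' : Set (Fin (n + 1) → κ.ord.ToType)},
      (∀ j, A j ∈ starProd n F) → A' ∈ starProd n F →
      (∀ j, starTrace n F (A j) (s j) = starTrace n F A' (s j)) → ⋂ j, A j ∈ starProd n F
  | 0, F, π, hpp, s, hs, A, A', hA, hA', htr => by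
    rw [mem_starProd_zero]
    filter_upwards [hs 0, mem_starProd_zero.1 hA', (hpp 0).diagInter_mem fun j => hA j]
      with b hb hbA' hbA
    simp only [mem_preimage, mem_iInter]
    intro j
    rcases lt_or_ge j (π 0 b) with hj | hj
    · exact hbA j hj
    · exact mem_of_starTrace_zero_eq (htr j) (hb j hj) hbA'
  | n + 1, F, π, hpp, s, hs, A, A', hA, hA', htr => by
    have := cardinalInterFilter_starProd fun i => (hpp i.succ).cardinalInterFilter
    rw [mem_starProd_succ]
    filter_upwards [hs 0, mem_starProd_succ.1 hA',
      (hpp 0).diagInter_mem fun j => mem_starProd_succ.1 (hA j)] with b hb hbA' hbA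
    -- Below `π 0 b` the sections of `A j` are handled by κ-completeness; from `π 0 b` on,
    -- `b < s j` and the traces of the sections agree, so the induction hypothesis applies.
    let B j := if π 0 b ≤ j then {v | Fin.cons b v ∈ A j} else {v | Fin.cons b v ∈ A'}
    have hB : ⋂ j, B j ∈ starProd n fun i => F i.succ := by
      refine iInter_mem_starProd_of_starTrace_eq (fun i => hpp i.succ) (fun k => hs k.succ)
        (fun j => ?_) hbA' fun j => ?_
      · dsimp only [B]
        split_ifs with hj
        · exact mem_starProd_of_starTrace_eq (starTrace_setOf_cons_mem_eq (htr j) (hb j hj)) hbA'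
        · exact hbA'
      · dsimp only [B]
        split_ifs with hj
        · exact starTrace_setOf_cons_mem_eq (htr j) (hb j hj)
        · rfl
    have hlow : ⋂ j : Iio (π 0 b), {v | Fin.cons b v ∈ A j} ∈ starProd n fun i => F i.succ :=
      (cardinal_iInter_mem (by simpa using mk_Iio_lt (π 0 b))).2 fun j => hbA j j.2
    filter_upwards [hB, hlow] with v hvB hvlow
    simp only [mem_ofPred_eq, mem_iInter] at hvB hvlow ⊢
    intro j
    rcases lt_or_ge j (π 0 b) with hj | hj
    · exact hvlow ⟨j, hj⟩
    · simpa [B, hj] using hvB j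

theorem starProd_generalized_galvin_general
    (κ : Cardinal) (hreg : κ.IsRegular) (hκ : ℵ₀ < κ)
    (h2 : ∀ ν : Cardinal, ν < κ → (2 : Cardinal) ^ ν ≤ κ)
    (n : ℕ) (F : Fin (n + 1) → Filter κ.ord.ToType)
    (π : Fin (n + 1) → κ.ord.ToType → κ.ord.ToType)
    (hpp : ∀ i, IsPPointFilter κ (F i) (π i))
    (Y : (Order.succ κ).ord.ToType → Set (Fin (n + 1) → κ.ord.ToType))
    (hY : ∀ i, memStarProd n F (Y i))
    (Z : (Order.succ κ).ord.ToType → Set κ.ord.ToType) :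
    ∃ S : Set ((Order.succ κ).ord.ToType), #↥S = κ ∧
      memStarProd n F (⋂ i ∈ S, Y i) ∧
      ∃ α, α ∉ S ∧ ∀ s : Set κ.ord.ToType, s.Finite → s ⊆ Z α →
        ∃ i ∈ S, s ⊆ Z i := by
  have := nonempty_ord_toType hreg.ne_zero
  simp only [memStarProd_iff_mem_starProd] at hY ⊢
  obtain ⟨s, hs⟩ :=
    exists_forall_eventually_lt_of_mk_fiber_lt hreg fun k => (hpp k).exists_mem_forall_mk_fiber_lt
  -- the type of `α` at level `j`
  let τ (j : κ.ord.ToType) (α : (Order.succ κ).ord.ToType) :=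
    (starTrace n F (Y α) (s j), Z α ∩ Iic j)
  have hτ (j) : #(range (τ j)) ≤ κ :=
    (mk_range_pair_le _ _).trans <| (mul_le_mul' (mk_range_starTrace_le hκ h2 F Y (s j))
      (mk_le_of_subset_powerset h2 (by rintro _ ⟨α, rfl⟩; exact inter_subset_right)
        (mk_Iic_ord_toType_lt hκ.le j))).trans (mul_eq_self hκ.le).le
  obtain ⟨α, hα⟩ := exists_forall_lt_mk_preimage hκ.le (by simp) (by simp) τ hτ
  obtain ⟨f, hf_inj, hf⟩ := exists_injective_forall_mem (P := fun j => τ j ⁻¹' {τ j α} \ {α})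
    fun j => (by simpa using mk_Iio_lt j : #(Iio j) < κ).trans
      (lt_mk_diff_singleton hκ.le (hα j) α)
  refine ⟨range f, by simp [mk_range_eq _ hf_inj], ?_, α, fun ⟨j, hj⟩ => (hf j).2 hj, ?_⟩
  · rw [biInter_range]
    exact iInter_mem_starProd_of_starTrace_eq hpp hs (fun j => hY (f j)) (hY α)
      fun j => congrArg Prod.fst (hf j).1
  · intro t ht htZ
    obtain ⟨j, hj⟩ := ht.bddAbove
    have : Z (f j) ∩ Iic j = Z α ∩ Iic j := congrArg Prod.snd (hf j).1
    exact ⟨f j, mem_range_self j, fun x hx => (this ▸ ⟨htZ hx, hj hx⟩ : x ∈ Z (f j) ∩ Iic j).1⟩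

/-- **Generalized Galvin property for products of P-point filters.** If `κ` is regular
uncountable with `2^{<κ} = κ` and `F 0, …, F n` are P-point filters on `κ`, then for every
sequence `⟨Y i : i < κ⁺⟩` of members of `∏* F` and every sequence `⟨Z i : i < κ⁺⟩` of
subsets of `κ` there is `S ⊆ κ⁺` of cardinality `κ` with `⋂_{i ∈ S} Y i ∈ ∏* F`, and some
`α ∉ S` such that every finite subset of `Z α` is contained in `Z i` for some `i ∈ S`. -/
theorem starProd_generalized_galvin
    (κ : Cardinal) (hreg : κ.IsRegular) (hκ : ℵ₀ < κ)
    (h2 : ∀ ν : Cardinal, ν < κ → (2 : Cardinal) ^ ν ≤ κ)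
    (n : ℕ) (F : Fin (n + 1) → Filter κ.ord.ToType)
    (π : Fin (n + 1) → κ.ord.ToType → κ.ord.ToType)
    (hpp : ∀ i, IsPPointFilter κ (F i) (π i))
    (Y : (Order.succ κ).ord.ToType → Set (Fin (n + 1) → κ.ord.ToType))
    (hYsub : ∀ i, Y i ⊆ starTuples (n + 1) π)
    (hY : ∀ i, memStarProd n F (Y i))
    (Z : (Order.succ κ).ord.ToType → Set κ.ord.ToType) :
    ∃ S : Set ((Order.succ κ).ord.ToType), #↥S = κ ∧
      memStarProd n F (⋂ i ∈ S, Y i) ∧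
      ∃ α, α ∉ S ∧ ∀ s : Set κ.ord.ToType, s.Finite → s ⊆ Z α →
        ∃ i ∈ S, s ⊆ Z i :=
  starProd_generalized_galvin_general κ hreg hκ h2 n F π hpp Y hY Z
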